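/- Let Y(ξ,η,ζ) = Y₁ ∧ Y₂ with Y₁ = (η+ζ)e₁ + e₄ + ξe₃, Y₂ = −ξe₁ + e₂ + (η−ζ)e₃. Then Y(ξ,η,ζ) ∧ Y(ξ+dξ, η+dη, ζ+dζ) = ((dη)² + (dξ)² − (dζ)²) e₁∧e₂∧e₃∧e₄. Consequently, the two Lagrangian planes corresponding to (ξ,η,ζ) and (ξ+dξ, η+dη, ζ+dζ) intersect in a line if and only if (dξ)² + (dη)² − (dζ)² = 0. -/

import Mathlib

/- V = ℝ⁴ with standard basis e₁, e₂, e₃, e₄ (indexed here by 0, 1, 2, 3). -/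
abbrev V4 : Type := Fin 4 → ℝ

/-- the standard basis vector eᵢ (i = 0,...,3 stands for e₁,...,e₄) -/
noncomputable def e (i : Fin 4) : V4 := Pi.single i 1

/-- wedge of two vectors in the exterior algebra of ℝ⁴ -/
noncomputable def w (v w : V4) : ExteriorAlgebra ℝ V4 :=
  ExteriorAlgebra.ι ℝ v * ExteriorAlgebra.ι ℝ w

/-- Y₁ = (η+ζ) e₁ + e₄ + ξ e₃ -/
noncomputable def Y1 (ξ η ζ : ℝ) : V4 := (η + ζ) • e 0 + e 3 + ξ • e 2
/-- Y₂ = −ξ e₁ + e₂ + (η−ζ) e₃ -/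
noncomputable def Y2 (ξ η ζ : ℝ) : V4 := -ξ • e 0 + e 1 + (η - ζ) • e 2

/-- the bivector Y(ξ,η,ζ) = Y₁ ∧ Y₂ representing a Lagrangian plane -/
noncomputable def bivLag (ξ η ζ : ℝ) : ExteriorAlgebra ℝ V4 :=
  w (Y1 ξ η ζ) (Y2 ξ η ζ)

/- Both sides of the identity are the 4-fold wedge of Y₁, Y₂, Y₁', Y₂', which is the determinant
of these four vectors times e₁∧e₂∧e₃∧e₄; the determinant works out to (dη)² + (dξ)² − (dζ)².
Since e₁∧e₂∧e₃∧e₄ ≠ 0, the wedge vanishes exactly when this quadratic form does. -/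

open Module

section

variable {R M : Type*} [CommRing R] [AddCommGroup M] [Module R M]

theorem AlternatingMap.apply_eq_basis_det_smul {ι N : Type*} [Fintype ι] [DecidableEq ι]
    [AddCommGroup N] [Module R N] (f : M [⋀^ι]→ₗ[R] N) (b : Basis ι R M) (v : ι → M) :
    f v = b.det v • f b := by
  suffices f = b.det.smulRight (f b) from DFunLike.congr_fun this v
  refine Basis.ext_alternating b fun i hi => ?_
  let σ : Equiv.Perm ι := Equiv.ofBijective i (Finite.injective_iff_bijective.1 hi)
  change f (b ∘ σ) = b.det (b ∘ σ) • f b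
  simp [AlternatingMap.map_perm, Basis.det_self]

theorem ExteriorAlgebra.ιMulti_basis_ne_zero [Nontrivial R] {n : ℕ} (b : Basis (Fin n) R M) :
    ExteriorAlgebra.ιMulti R n b ≠ 0 := by
  intro h
  have h' : exteriorPower.ιMulti R n b = 0 := Subtype.ext h
  simpa [Basis.det_self] using
    congrArg (exteriorPower.alternatingMapLinearEquiv b.det) h'

theorem ExteriorAlgebra.ιMulti_fin_four (a b c d : M) :
    ExteriorAlgebra.ιMulti R 4 ![a, b, c, d] =
      ι R a * ι R b * ι R c * ι R d := by
  simp [ExteriorAlgebra.ιMulti_apply, mul_assoc]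

end

theorem vec_e_eq_basisFun : ![e 0, e 1, e 2, e 3] = ⇑(Pi.basisFun ℝ (Fin 4)) := by
  funext i
  fin_cases i <;> simp [e]

theorem det_Y1_Y2_Y1_Y2 (ξ η ζ ξ' η' ζ' : ℝ) :
    (Matrix.of ![Y1 ξ η ζ, Y2 ξ η ζ, Y1 ξ' η' ζ', Y2 ξ' η' ζ']).det =
      (η' - η) ^ 2 + (ξ' - ξ) ^ 2 - (ζ' - ζ) ^ 2 := by
  simp [Matrix.det_succ_row_zero, Fin.sum_univ_succ, Fin.succAbove, Y1, Y2, e]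
  ring

theorem bivLag_mul_bivLag (ξ η ζ ξ' η' ζ' : ℝ) :
    bivLag ξ η ζ * bivLag ξ' η' ζ' =
      ((η' - η) ^ 2 + (ξ' - ξ) ^ 2 - (ζ' - ζ) ^ 2) •
        ExteriorAlgebra.ιMulti ℝ 4 ⇑(Pi.basisFun ℝ (Fin 4)) := by
  rw [← det_Y1_Y2_Y1_Y2, ← Pi.basisFun_det_apply, ← AlternatingMap.apply_eq_basis_det_smul,
    ExteriorAlgebra.ιMulti_fin_four, bivLag, bivLag, w, w]
  simp only [mul_assoc]

/-- Y(ξ,η,ζ) ∧ Y(ξ+dξ,η+dη,ζ+dζ) = ((dη)²+(dξ)²−(dζ)²) e₁∧e₂∧e₃∧e₄;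
    consequently the two Lagrangian planes intersect in a line (the wedge vanishes)
    iff (dξ)² + (dη)² − (dζ)² = 0. -/
theorem lagrangian_planes_incidence (ξ η ζ dξ dη dζ : ℝ) :
    bivLag ξ η ζ * bivLag (ξ + dξ) (η + dη) (ζ + dζ) =
      (dη ^ 2 + dξ ^ 2 - dζ ^ 2) •
        (ExteriorAlgebra.ι ℝ (e 0) * ExteriorAlgebra.ι ℝ (e 1) *
         ExteriorAlgebra.ι ℝ (e 2) * ExteriorAlgebra.ι ℝ (e 3)) ∧
    (bivLag ξ η ζ * bivLag (ξ + dξ) (η + dη) (ζ + dζ) = 0 ↔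
      dξ ^ 2 + dη ^ 2 - dζ ^ 2 = 0) := by
  have hwedge := bivLag_mul_bivLag ξ η ζ (ξ + dξ) (η + dη) (ζ + dζ)
  simp only [add_sub_cancel_left] at hwedge
  refine ⟨by rw [hwedge, ← vec_e_eq_basisFun, ExteriorAlgebra.ιMulti_fin_four], ?_⟩
  rw [hwedge, smul_eq_zero, or_iff_left (ExteriorAlgebra.ιMulti_basis_ne_zero _)]
  constructor <;> intro h <;> linarith
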